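/- Let u(t) = Σ_{n∈N} u_n(t) be a finite sum of harmonic components u_n(t) = √2 U_n^c cos(nωt) + √2 U_n^s sin(nωt) (with distinct positive integers n), and let i ∈ L²[0,T]. Define the active current i_a = (⟨u,i⟩/‖u‖²)u, the conductance coefficients G_n = ⟨u_n,i⟩/‖u_n‖², the scattered current i_s = Σ_n (G_n − G_e)u_n with G_e = ⟨u,i⟩/‖u‖², and the reactive current i_r = Σ_n (⟨u̇_n,i⟩/‖u̇_n‖²)u̇_n where u̇_n is the time derivative of u_n. Then i_a, i_s, i_r are pairwise orthogonal: ⟨i_a,i_s⟩ = ⟨i_a,i_r⟩ = ⟨i_s,i_r⟩ = 0. -/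

import Mathlib

/-!
The components `uₙ` are sinusoids of distinct frequencies `n ω`, hence mutually orthogonal, and
each `uₙ` is orthogonal to every `u̇ₘ`: for `m ≠ n` by frequency, for `m = n` because
`∫₀ᵀ uₙ u̇ₙ = [uₙ² / 2]₀ᵀ` vanishes over a period. So `i_r`, a combination of the `u̇ₘ`, is
orthogonal to `i_a` and `i_s`, which are combinations of the `uₙ`. Finally, as `‖u‖² = ∑ ‖uₙ‖²`,
`⟨u, i_s⟩ = ∑ (Gₙ - G_e) ‖uₙ‖² = ∑ ⟨uₙ, i⟩ - G_e ‖u‖² = ⟨u, i⟩ - ⟨u, i⟩ = 0`.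
-/

open MeasureTheory intervalIntegral

/-- mean inner product over one period. -/
noncomputable def ip (T : ℝ) (f g : ℝ → ℝ) : ℝ :=
  (1/T) * ∫ t in (0:ℝ)..T, f t * g t

open Real

noncomputable def sinusoid (ν A B t : ℝ) : ℝ := A * cos (ν * t) + B * sin (ν * t)

lemma hasDerivAt_sinusoid (ν A B t : ℝ) :
    HasDerivAt (sinusoid ν A B) (sinusoid ν (ν * B) (-(ν * A)) t) t := by
  have hlin : HasDerivAt (fun t => ν * t) ν t := by simpa using (hasDerivAt_id t).const_mul ν
  exact ((hlin.cos.const_mul A).add (hlin.sin.const_mul B)).congr_deriv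
    (by simp only [sinusoid]; ring)

lemma continuous_sinusoid (ν A B : ℝ) : Continuous (sinusoid ν A B) := by
  unfold sinusoid; fun_prop

lemma sinusoid_periodic {ν T : ℝ} {k : ℤ} (h : ν * T = k * (2 * π)) (A B : ℝ) :
    Function.Periodic (sinusoid ν A B) T := fun t => by
  simp only [sinusoid, mul_add, h, cos_periodic.int_mul k _, sin_periodic.int_mul k _]

lemma integral_sinusoid_eq_zero {ν T : ℝ} {k : ℤ} (hν : ν ≠ 0) (h : ν * T = k * (2 * π))
    (A B : ℝ) : ∫ t in (0 : ℝ)..T, sinusoid ν A B t = 0 := by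
  have hF : ∀ t, HasDerivAt (sinusoid ν (-B / ν) (A / ν)) (sinusoid ν A B t) t := fun t => by
    convert hasDerivAt_sinusoid ν (-B / ν) (A / ν) t using 2 <;> field_simp
  rw [integral_eq_sub_of_hasDerivAt (fun t _ => hF t)
    ((continuous_sinusoid ν A B).intervalIntegrable _ _), (sinusoid_periodic h _ _).eq, sub_self]

lemma sinusoid_mul_sinusoid (ν μ A B C D t : ℝ) :
    sinusoid ν A B t * sinusoid μ C D t =
      sinusoid (ν - μ) ((A * C + B * D) / 2) ((B * C - A * D) / 2) t +
      sinusoid (ν + μ) ((A * C - B * D) / 2) ((A * D + B * C) / 2) t := by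
  simp only [sinusoid, sub_mul, add_mul, cos_sub, cos_add, sin_sub, sin_add]
  ring

lemma ip_sinusoid_of_ne {T : ℝ} (hT : T ≠ 0) {n m : ℕ} (hnm : n ≠ m) (A B C D : ℝ) :
    ip T (sinusoid (n * (2 * π / T)) A B) (sinusoid (m * (2 * π / T)) C D) = 0 := by
  have hω : 2 * π / T ≠ 0 := by positivity
  have hsub : (n : ℝ) * (2 * π / T) - m * (2 * π / T) ≠ 0 := by
    rw [← sub_mul]; exact mul_ne_zero (sub_ne_zero.2 (by exact_mod_cast hnm)) hω
  have hadd : (n : ℝ) * (2 * π / T) + m * (2 * π / T) ≠ 0 := by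
    rw [← add_mul]; exact mul_ne_zero (by norm_cast; omega) hω
  simp only [ip, sinusoid_mul_sinusoid]
  rw [integral_add ((continuous_sinusoid _ _ _).intervalIntegrable _ _)
      ((continuous_sinusoid _ _ _).intervalIntegrable _ _),
    integral_sinusoid_eq_zero hsub (k := n - m) (by push_cast; field_simp),
    integral_sinusoid_eq_zero hadd (k := n + m) (by push_cast; field_simp), add_zero, mul_zero]

section InnerProduct

variable {T : ℝ}

lemma ip_comm (f g : ℝ → ℝ) : ip T f g = ip T g f := by
  simp only [ip, mul_comm (f _)]

lemma ip_const_mul_left (c : ℝ) (f g : ℝ → ℝ) : ip T (fun t => c * f t) g = c * ip T f g := by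
  simp only [ip, mul_assoc, intervalIntegral.integral_const_mul]
  ring

lemma ip_self_deriv_eq_zero {f f' : ℝ → ℝ} (hf : ∀ t, HasDerivAt f (f' t) t)
    (hf' : Continuous f') (hper : f T = f 0) : ip T f f' = 0 := by
  have hfc : Continuous f := continuous_iff_continuousAt.2 fun t => (hf t).continuousAt
  have hsq : ∀ t, HasDerivAt (fun t => f t ^ 2 / 2) (f t * f' t) t := fun t =>
    (((hf t).pow 2).div_const 2).congr_deriv (by ring)
  rw [ip, integral_eq_sub_of_hasDerivAt (fun t _ => hsq t) ((hfc.mul hf').intervalIntegrable _ _),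
    hper, sub_self, mul_zero]

variable {ι : Type*} {N : Finset ι}

lemma ip_eq_sum_of_eq_sum {c : ι → ℝ} {e : ι → ℝ → ℝ} {f g : ℝ → ℝ}
    (hg : ∀ t, g t = ∑ n ∈ N, c n * e n t)
    (h : ∀ n ∈ N, IntervalIntegrable (fun t => f t * e n t) volume 0 T) :
    ip T f g = ∑ n ∈ N, c n * ip T f (e n) := by
  have hfg : ∀ t, f t * g t = ∑ n ∈ N, c n * (f t * e n t) := fun t => by
    rw [hg, Finset.mul_sum]; exact Finset.sum_congr rfl fun n _ => by ring
  simp only [ip, hfg, intervalIntegral.integral_finsetSum fun n hn => (h n hn).const_mul (c n),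
    intervalIntegral.integral_const_mul, Finset.mul_sum]
  exact Finset.sum_congr rfl fun n _ => by ring

lemma ip_eq_zero_of_eq_sum_of_eq_sum {M : Finset ι} {a b : ι → ℝ} {e d : ι → ℝ → ℝ}
    {f g : ℝ → ℝ} (hf : ∀ t, f t = ∑ n ∈ N, a n * e n t) (hg : ∀ t, g t = ∑ m ∈ M, b m * d m t)
    (he : ∀ n ∈ N, Continuous (e n)) (hd : ∀ m ∈ M, Continuous (d m))
    (hed : ∀ n ∈ N, ∀ m ∈ M, ip T (e n) (d m) = 0) : ip T f g = 0 := by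
  have hfc : Continuous f :=
    (continuous_finsetSum N fun n hn => continuous_const.mul (he n hn)).congr fun t => (hf t).symm
  rw [ip_eq_sum_of_eq_sum hg fun m hm => (hfc.mul (hd m hm)).intervalIntegrable _ _]
  refine Finset.sum_eq_zero fun m hm => mul_eq_zero_of_right _ ?_
  rw [ip_comm, ip_eq_sum_of_eq_sum hf fun n hn => ((hd m hm).mul (he n hn)).intervalIntegrable _ _]
  exact Finset.sum_eq_zero fun n hn => by rw [ip_comm, hed n hn m hm, mul_zero]

lemma ip_scattered_eq_zero {e : ι → ℝ → ℝ} {u i s : ℝ → ℝ} {G : ι → ℝ}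
    (he : ∀ n ∈ N, Continuous (e n)) (horth : ∀ n ∈ N, ∀ m ∈ N, n ≠ m → ip T (e n) (e m) = 0)
    (hu : ∀ t, u t = ∑ n ∈ N, e n t) (hi : IntervalIntegrable i volume 0 T)
    (hu0 : ip T u u ≠ 0) (he0 : ∀ n ∈ N, ip T (e n) (e n) ≠ 0)
    (hG : ∀ n ∈ N, G n = ip T (e n) i / ip T (e n) (e n))
    (hs : ∀ t, s t = ∑ n ∈ N, (G n - ip T u i / ip T u u) * e n t) :
    ip T u s = 0 := by
  set Ge := ip T u i / ip T u u
  have hu1 : ∀ t, u t = ∑ n ∈ N, 1 * e n t := by simpa using hu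
  have huc : Continuous u := (continuous_finsetSum N he).congr fun t => (hu t).symm
  have hue : ∀ m ∈ N, ip T u (e m) = ip T (e m) (e m) := fun m hm => by
    rw [ip_comm,
      ip_eq_sum_of_eq_sum hu1 fun n hn => ((he m hm).mul (he n hn)).intervalIntegrable _ _,
      Finset.sum_eq_single m (fun n hn hnm => by rw [horth m hm n hn hnm.symm, mul_zero])
        (fun hm' => absurd hm hm'), one_mul]
  have huu : ip T u u = ∑ n ∈ N, ip T (e n) (e n) := by
    rw [ip_eq_sum_of_eq_sum hu1 fun n hn => (huc.mul (he n hn)).intervalIntegrable _ _]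
    exact Finset.sum_congr rfl fun n hn => by rw [one_mul, hue n hn]
  have hui : ip T u i = ∑ n ∈ N, ip T (e n) i := by
    rw [ip_comm, ip_eq_sum_of_eq_sum hu1 fun n hn => hi.mul_continuousOn (he n hn).continuousOn]
    simp only [one_mul, ip_comm i]
  calc ip T u s = ∑ n ∈ N, (ip T (e n) i - Ge * ip T (e n) (e n)) := by
        rw [ip_eq_sum_of_eq_sum hs fun n hn => (huc.mul (he n hn)).intervalIntegrable _ _]
        refine Finset.sum_congr rfl fun n hn => ?_
        rw [hue n hn, hG n hn, sub_mul, div_mul_cancel₀ _ (he0 n hn)]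
    _ = ip T u i - Ge * ip T u u := by rw [Finset.sum_sub_distrib, ← Finset.mul_sum, hui, huu]
    _ = 0 := by rw [div_mul_cancel₀ _ hu0, sub_self]

end InnerProduct

theorem cpc_pairwise_orthogonal_general (T : ℝ) (hT : 0 < T) (ω : ℝ) (hω : ω = 2 * Real.pi / T)
    (N : Finset ℕ)
    (Uc Us : ℕ → ℝ) (un dun : ℕ → ℝ → ℝ) (u i : ℝ → ℝ)
    (hun : ∀ n ∈ N, ∀ t, un n t =
      Real.sqrt 2 * Uc n * Real.cos (n * ω * t) + Real.sqrt 2 * Us n * Real.sin (n * ω * t))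
    (hdun : ∀ n ∈ N, ∀ t, HasDerivAt (un n) (dun n t) t)
    (hu : ∀ t, u t = ∑ n ∈ N, un n t)
    (hi : MemLp i 2 (volume.restrict (Set.Ioc 0 T)))
    (hu0 : ip T u u ≠ 0) (hun0 : ∀ n ∈ N, ip T (un n) (un n) ≠ 0)
    (Ge : ℝ) (hGe : Ge = ip T u i / ip T u u)
    (G : ℕ → ℝ) (hG : ∀ n ∈ N, G n = ip T (un n) i / ip T (un n) (un n))
    (ia is ir : ℝ → ℝ)
    (hia : ∀ t, ia t = Ge * u t)
    (his : ∀ t, is t = ∑ n ∈ N, (G n - Ge) * un n t)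
    (hir : ∀ t, ir t = ∑ n ∈ N, (ip T (dun n) i / ip T (dun n) (dun n)) * dun n t) :
    ip T ia is = 0 ∧ ip T ia ir = 0 ∧ ip T is ir = 0 := by
  subst hω hGe
  have hun' : ∀ n ∈ N, un n = sinusoid (n * (2 * π / T)) (√2 * Uc n) (√2 * Us n) :=
    fun n hn => funext (hun n hn)
  have hdun' : ∀ n ∈ N, dun n = sinusoid (n * (2 * π / T)) (n * (2 * π / T) * (√2 * Us n))
      (-(n * (2 * π / T) * (√2 * Uc n))) := fun n hn => funext fun t =>
    (hdun n hn t).unique (hun' n hn ▸ hasDerivAt_sinusoid _ _ _ t)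
  have hcont_un : ∀ n ∈ N, Continuous (un n) := fun n hn => hun' n hn ▸ continuous_sinusoid _ _ _
  have hcont_dun : ∀ n ∈ N, Continuous (dun n) := fun n hn => hdun' n hn ▸ continuous_sinusoid _ _ _
  have hee : ∀ n ∈ N, ∀ m ∈ N, n ≠ m → ip T (un n) (un m) = 0 := fun n hn m hm hnm => by
    rw [hun' n hn, hun' m hm]; exact ip_sinusoid_of_ne hT.ne' hnm _ _ _ _
  have hed : ∀ n ∈ N, ∀ m ∈ N, ip T (un n) (dun m) = 0 := by
    intro n hn m hm
    rcases eq_or_ne n m with rfl | hnm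
    · refine ip_self_deriv_eq_zero (hdun n hn) (hcont_dun n hn) ?_
      rw [hun' n hn]
      exact (sinusoid_periodic (k := n) (by push_cast; field_simp) _ _).eq
    · rw [hun' n hn, hdun' m hm]; exact ip_sinusoid_of_ne hT.ne' hnm _ _ _ _
  have hi' : IntervalIntegrable i volume 0 T :=
    (intervalIntegrable_iff_integrableOn_Ioc_of_le hT.le).2 (hi.integrable one_le_two)
  have hs := ip_scattered_eq_zero hcont_un hee hu hi' hu0 hun0 hG his
  have hr := ip_eq_zero_of_eq_sum_of_eq_sum (a := 1) (by simpa using hu) hir hcont_un hcont_dun hed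
  refine ⟨?_, ?_, ip_eq_zero_of_eq_sum_of_eq_sum his hir hcont_un hcont_dun hed⟩
  · rw [funext hia, ip_const_mul_left, hs, mul_zero]
  · rw [funext hia, ip_const_mul_left, hr, mul_zero]

theorem cpc_pairwise_orthogonal (T : ℝ) (hT : 0 < T) (ω : ℝ) (hω : ω = 2 * Real.pi / T)
    (N : Finset ℕ) (hN : ∀ n ∈ N, 0 < n)
    (Uc Us : ℕ → ℝ) (un dun : ℕ → ℝ → ℝ) (u i : ℝ → ℝ)
    (hun : ∀ n ∈ N, ∀ t, un n t =
      Real.sqrt 2 * Uc n * Real.cos (n * ω * t) + Real.sqrt 2 * Us n * Real.sin (n * ω * t))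
    (hdun : ∀ n ∈ N, ∀ t, HasDerivAt (un n) (dun n t) t)
    (hu : ∀ t, u t = ∑ n ∈ N, un n t)
    (hi : MemLp i 2 (volume.restrict (Set.Ioc 0 T)))
    (hu0 : ip T u u ≠ 0) (hun0 : ∀ n ∈ N, ip T (un n) (un n) ≠ 0)
    (Ge : ℝ) (hGe : Ge = ip T u i / ip T u u)
    (G : ℕ → ℝ) (hG : ∀ n ∈ N, G n = ip T (un n) i / ip T (un n) (un n))
    (ia is ir : ℝ → ℝ)
    (hia : ∀ t, ia t = Ge * u t)
    (his : ∀ t, is t = ∑ n ∈ N, (G n - Ge) * un n t)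
    (hir : ∀ t, ir t = ∑ n ∈ N, (ip T (dun n) i / ip T (dun n) (dun n)) * dun n t) :
    ip T ia is = 0 ∧ ip T ia ir = 0 ∧ ip T is ir = 0 :=
  cpc_pairwise_orthogonal_general T hT ω hω N Uc Us un dun u i hun hdun hu hi hu0 hun0 Ge hGe G hG
    ia is ir hia his hir
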